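/- Suppose f : Λ → ℤ where Λ is a finite abelian group, f(−γ) = f(γ), and for some positive integer N we have N·∑_γ f(γ) ≡ 0 (mod 24). If gcd(N, 8) < 8, then f(0) + ∑_{γ=−γ, γ≠0} f(γ) is even. -/

import Mathlib

/-!
Since `8 ∤ N` and `8 ∣ N · ∑ f`, the total sum `∑ f` is even. Modulo `2` the values of `f` at
`γ` and `-γ` cancel whenever `γ ≠ -γ`, so `∑ f` has the parity of the sum over the self-inverse
elements, which is `f 0 + ∑_{γ = -γ, γ ≠ 0} f γ`.
-/

open Finset

theorem Int.even_of_two_pow_dvd_mul {k : ℕ} {a b : ℤ} (h : 2 ^ k ∣ a * b) (ha : ¬ 2 ^ k ∣ a) :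
    Even b := by
  by_contra hb
  have hcop : IsCoprime ((2 : ℤ) ^ k) b :=
    (Int.prime_two.coprime_iff_not_dvd.mpr (by rwa [← even_iff_two_dvd])).pow_left
  exact ha (hcop.dvd_of_dvd_mul_right h)

section NegInvolution

variable {Λ : Type*} [AddCommGroup Λ] [Fintype Λ] [DecidableEq Λ]

theorem Finset.sum_filter_ne_neg_eq_zero {M : Type*} [AddCommMonoid M] (f : Λ → M)
    (hf : ∀ γ, f γ + f (-γ) = 0) : ∑ γ ∈ univ.filter (fun γ => γ ≠ -γ), f γ = 0 :=
  sum_involution (fun γ _ => -γ) (fun γ _ => hf γ)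
    (fun _ hγ _ h => (mem_filter.mp hγ).2 h.symm)
    (fun γ hγ => by simpa [eq_comm] using hγ)
    (fun γ _ => neg_neg γ)

theorem CharTwo.sum_eq_sum_filter_eq_neg {R : Type*} [Ring R] [CharP R 2] (f : Λ → R)
    (hf : ∀ γ, f (-γ) = f γ) : ∑ γ, f γ = ∑ γ ∈ univ.filter (fun γ => γ = -γ), f γ := by
  rw [← sum_filter_add_sum_filter_not univ (fun γ => γ = -γ),
    sum_filter_ne_neg_eq_zero f (fun γ => by rw [hf, CharTwo.add_self_eq_zero]), add_zero]

theorem Finset.sum_filter_eq_neg_eq_add {M : Type*} [AddCommMonoid M] (f : Λ → M) :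
    ∑ γ ∈ univ.filter (fun γ => γ = -γ), f γ
      = f 0 + ∑ γ ∈ univ.filter (fun γ => γ = -γ ∧ γ ≠ 0), f γ := by
  rw [← filter_filter, filter_ne', add_sum_erase _ _ (by simp)]

end NegInvolution

theorem stmt_14_general (Λ : Type*) [AddCommGroup Λ] [Fintype Λ] [DecidableEq Λ]
    (f : Λ → ℤ) (hsym : ∀ γ : Λ, f (-γ) = f γ)
    (N : ℕ) (hcong : (24 : ℤ) ∣ (N : ℤ) * ∑ γ : Λ, f γ)
    (hgcd : Nat.gcd N 8 < 8) :
    Even (f 0 + ∑ γ ∈ Finset.univ.filter (fun γ : Λ => γ = -γ ∧ γ ≠ 0), f γ) := by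
  have hN8 : ¬ (2 : ℤ) ^ 3 ∣ N := fun h =>
    hgcd.ne (Nat.gcd_eq_right (by exact_mod_cast h))
  have hsum : Even (∑ γ, f γ) :=
    Int.even_of_two_pow_dvd_mul (dvd_trans (by norm_num) hcong) hN8
  rw [← ZMod.intCast_eq_zero_iff_even] at hsum ⊢
  push_cast at hsum ⊢
  rwa [CharTwo.sum_eq_sum_filter_eq_neg _ (fun γ => by rw [hsym]),
    sum_filter_eq_neg_eq_add] at hsum

/-- If `f` is negation-invariant on a finite abelian group, `N · ∑ f ≡ 0 (mod 24)` for some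
positive `N` with `gcd(N,8) < 8`, then `f(0) + ∑_{γ = −γ, γ ≠ 0} f(γ)` is even. -/
theorem stmt_14 (Λ : Type*) [AddCommGroup Λ] [Fintype Λ] [DecidableEq Λ]
    (f : Λ → ℤ) (hsym : ∀ γ : Λ, f (-γ) = f γ)
    (N : ℕ) (hN : 0 < N) (hcong : (24 : ℤ) ∣ (N : ℤ) * ∑ γ : Λ, f γ)
    (hgcd : Nat.gcd N 8 < 8) :
    Even (f 0 + ∑ γ ∈ Finset.univ.filter (fun γ : Λ => γ = -γ ∧ γ ≠ 0), f γ) :=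
  stmt_14_general Λ f hsym N hcong hgcd
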